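/- arXiv:1402.2700 — 4 statements merged into one kernel-verified Lean document; each statement's English description precedes it below -/
import Mathlib

section
/- Every finite bowtie-free graph G is a (not necessarily induced) subgraph of a finite good bowtie-free graph G', i.e., a bowtie-free graph in which every vertex is contained in a copy of some chimney C_n (n ≥ 2) or in a copy of K4. -/
/-!
Complete to a `K₄`, by new vertices, every vertex lying on no triangle and every triangle that
meets no other triangle. These cliques are pairwise disjoint and contain every triangle meeting
them, so each triangle of the new graph lies in `G` or inside one of the new `K₄`s; a bowtie would
therefore lie in `G` or have its five vertices in a `K₄`. Any other vertex of `G` lies on a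
triangle meeting a second one, and by bowtie-freeness the two share an edge: a copy of `C₂`.
-/

/-- A triangle in a graph: a set of 3 pairwise adjacent vertices. -/
def IsTriangle {V : Type*} (G : SimpleGraph V) (t : Finset V) : Prop :=
  t.card = 3 ∧ ∀ u ∈ t, ∀ v ∈ t, u ≠ v → G.Adj u v

/-- `G` contains a bowtie (two triangles sharing exactly one vertex) as a
not-necessarily-induced subgraph. -/
def HasBowtie {V : Type*} (G : SimpleGraph V) : Prop :=
  ∃ a b c d e : V, a ≠ b ∧ a ≠ c ∧ a ≠ d ∧ a ≠ e ∧ b ≠ c ∧ b ≠ d ∧ b ≠ e ∧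
    c ≠ d ∧ c ≠ e ∧ d ≠ e ∧
    G.Adj a b ∧ G.Adj a c ∧ G.Adj b c ∧ G.Adj a d ∧ G.Adj a e ∧ G.Adj d e

/-- The `n`-chimney: vertices `inl 0 = u_L`, `inl 1 = u_R` forming the central edge,
and `inr i = v_i` each adjacent to both `u_L` and `u_R`, with no other edges. -/
def chimney (n : ℕ) : SimpleGraph (Fin 2 ⊕ Fin n) where
  Adj u v := u ≠ v ∧ (u.isLeft ∨ v.isLeft)
  symm := ⟨fun _ _ h => ⟨h.1.symm, h.2.symm⟩⟩
  loopless := ⟨fun _ h => h.1 rfl⟩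

/-- `v` lies in a (not necessarily induced) copy of `H` inside `G`. -/
def InCopy {W V : Type*} (H : SimpleGraph W) (G : SimpleGraph V) (v : V) : Prop :=
  ∃ f : W ↪ V, (∀ a b, H.Adj a b → G.Adj (f a) (f b)) ∧ v ∈ Set.range f

/-- A graph is good if every vertex is contained in a copy of a chimney `C_n` (`n ≥ 2`)
or of `K₄`. -/
def GoodGraph {V : Type*} (G : SimpleGraph V) : Prop :=
  ∀ v : V, (∃ n, 2 ≤ n ∧ InCopy (chimney n) G v) ∨ InCopy (⊤ : SimpleGraph (Fin 4)) G v

open Finset Function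

section Copies

variable {V W : Type*} {G : SimpleGraph V}

theorem HasBowtie.map {G' : SimpleGraph W} (φ : G ↪g G') (h : HasBowtie G) : HasBowtie G' := by
  obtain ⟨a, b, c, d, e, h₁, h₂, h₃, h₄, h₅, h₆, h₇, h₈, h₉, h₁₀, A₁, A₂, A₃, A₄, A₅, A₆⟩ := h
  have hne {x y : V} (h : x ≠ y) : φ x ≠ φ y := φ.injective.ne h
  exact ⟨φ a, φ b, φ c, φ d, φ e, hne h₁, hne h₂, hne h₃, hne h₄, hne h₅, hne h₆, hne h₇,
    hne h₈, hne h₉, hne h₁₀, φ.map_adj_iff.2 A₁, φ.map_adj_iff.2 A₂, φ.map_adj_iff.2 A₃,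
    φ.map_adj_iff.2 A₄, φ.map_adj_iff.2 A₅, φ.map_adj_iff.2 A₆⟩

theorem InCopy.map {U : Type*} {H : SimpleGraph U} {G' : SimpleGraph W} (φ : G ↪g G') {v : V}
    (h : InCopy H G v) : InCopy H G' (φ v) := by
  obtain ⟨f, hf, w, rfl⟩ := h
  exact ⟨f.trans φ.toEmbedding, fun a b hab => φ.map_adj_iff.2 (hf a b hab), w, rfl⟩

theorem inCopy_top_of_isNClique {n : ℕ} {s : Finset V} (hs : G.IsNClique n s) {v : V}
    (hv : v ∈ s) : InCopy (⊤ : SimpleGraph (Fin n)) G v := by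
  let e : Fin n ≃ s := (s.equivFinOfCardEq hs.card_eq).symm
  refine ⟨e.toEmbedding.trans (Embedding.subtype _), fun i j hij => ?_,
    e.symm ⟨v, hv⟩, by simp⟩
  exact hs.isClique (e i).2 (e j).2 (by simpa [Subtype.ext_iff] using hij)

theorem inCopy_chimney {n : ℕ} {a b : V} (c : Fin n → V) (hc : Injective c)
    (hab : G.Adj a b) (hac : ∀ i, G.Adj a (c i)) (hbc : ∀ i, G.Adj b (c i)) {v : V}
    (hv : v = a ∨ v = b ∨ v ∈ Set.range c) : InCopy (chimney n) G v := by
  have hinj : Injective (Sum.elim ![a, b] c) := by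
    refine Injective.sumElim ?_ hc fun i j => ?_
    · intro i j; fin_cases i <;> fin_cases j <;> simp [hab.ne, hab.ne.symm]
    · fin_cases i
      exacts [(hac j).ne, (hbc j).ne]
  refine ⟨⟨_, hinj⟩, ?_, ?_⟩
  · rintro (i | i) (j | j) ⟨hij, hleft⟩
    · fin_cases i <;> fin_cases j <;> simp_all [hab.symm]
    · fin_cases i
      exacts [hac j, hbc j]
    · fin_cases j
      exacts [(hac i).symm, (hbc i).symm]
    · simp at hleft
  · rcases hv with rfl | rfl | ⟨i, rfl⟩
    exacts [⟨.inl 0, rfl⟩, ⟨.inl 1, rfl⟩, ⟨.inr i, rfl⟩]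

end Copies

namespace SimpleGraph

section Triangles

variable {V : Type*} [DecidableEq V] {G : SimpleGraph V} {s t : Finset V}

theorem hasBowtie_of_card_inter_eq_one (hs : G.IsNClique 3 s) (ht : G.IsNClique 3 t)
    (h : #(s ∩ t) = 1) : HasBowtie G := by
  obtain ⟨a, hst⟩ := card_eq_one.mp h
  have ha : a ∈ s ∧ a ∈ t := mem_inter.mp (hst ▸ mem_singleton_self a)
  have hs' : #(s.erase a) = 2 := by rw [card_erase_of_mem ha.1, hs.card_eq]
  have ht' : #(t.erase a) = 2 := by rw [card_erase_of_mem ha.2, ht.card_eq]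
  obtain ⟨b, c, hbc, hs'⟩ := card_eq_two.mp hs'
  obtain ⟨d, e, hde, ht'⟩ := card_eq_two.mp ht'
  have only_a {x : V} (hxs : x ∈ s) (hxt : x ∈ t) : x = a := by
    simpa [hst] using mem_inter.mpr ⟨hxs, hxt⟩
  have hb : b ≠ a ∧ b ∈ s := mem_erase.mp (by simp [hs'])
  have hc : c ≠ a ∧ c ∈ s := mem_erase.mp (by simp [hs'])
  have hd : d ≠ a ∧ d ∈ t := mem_erase.mp (by simp [ht'])
  have he : e ≠ a ∧ e ∈ t := mem_erase.mp (by simp [ht'])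
  have hne {x y : V} (hx : x ≠ a ∧ x ∈ s) (hy : y ∈ t) : x ≠ y := by
    rintro rfl; exact hx.1 (only_a hx.2 hy)
  exact ⟨a, b, c, d, e, hb.1.symm, hc.1.symm, hd.1.symm, he.1.symm, hbc, hne hb hd.2,
    hne hb he.2, hne hc hd.2, hne hc he.2, hde, hs.isClique ha.1 hb.2 hb.1.symm,
    hs.isClique ha.1 hc.2 hc.1.symm, hs.isClique hb.2 hc.2 hbc,
    ht.isClique ha.2 hd.2 hd.1.symm, ht.isClique ha.2 he.2 he.1.symm,
    ht.isClique hd.2 he.2 hde⟩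

theorem inCopy_chimney_two_of_card_inter_eq_two (hs : G.IsNClique 3 s) (ht : G.IsNClique 3 t)
    (h : #(s ∩ t) = 2) {v : V} (hv : v ∈ s) : InCopy (chimney 2) G v := by
  obtain ⟨a, b, hab, hst⟩ := card_eq_two.mp h
  have hs' : #(s \ t) = 1 := by rw [card_sdiff, hs.card_eq, inter_comm, h]
  have ht' : #(t \ s) = 1 := by rw [card_sdiff, ht.card_eq, h]
  obtain ⟨c, hsc⟩ := card_eq_one.mp hs'
  obtain ⟨d, htd⟩ := card_eq_one.mp ht'
  have ha : a ∈ s ∧ a ∈ t := mem_inter.mp (by simp [hst])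
  have hb : b ∈ s ∧ b ∈ t := mem_inter.mp (by simp [hst])
  have hc : c ∈ s ∧ c ∉ t := mem_sdiff.mp (by simp [hsc])
  have hd : d ∈ t ∧ d ∉ s := mem_sdiff.mp (by simp [htd])
  have hcd : c ≠ d := ne_of_mem_of_not_mem hc.1 hd.2
  refine inCopy_chimney ![c, d] ?_ (hs.isClique ha.1 hb.1 hab) ?_ ?_ ?_
  · intro i j; fin_cases i <;> fin_cases j <;> simp [hcd, hcd.symm]
  · intro i; fin_cases i
    exacts [hs.isClique ha.1 hc.1 (ne_of_mem_of_not_mem ha.2 hc.2),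
      ht.isClique ha.2 hd.1 (ne_of_mem_of_not_mem ha.1 hd.2)]
  · intro i; fin_cases i
    exacts [hs.isClique hb.1 hc.1 (ne_of_mem_of_not_mem hb.2 hc.2),
      ht.isClique hb.2 hd.1 (ne_of_mem_of_not_mem hb.1 hd.2)]
  · by_cases hvt : v ∈ t
    · have : v ∈ s ∩ t := mem_inter.mpr ⟨hv, hvt⟩
      simp only [hst, mem_insert, mem_singleton] at this
      tauto
    · obtain rfl : v = c := by simpa [hsc] using mem_sdiff.mpr ⟨hv, hvt⟩
      exact Or.inr (Or.inr ⟨0, rfl⟩)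

end Triangles

def TriangleClosed {V : Type*} (G : SimpleGraph V) (s : Finset V) : Prop :=
  ∀ ⦃u v w⦄, u ∈ s → G.Adj u v → G.Adj u w → G.Adj v w → v ∈ s

section Glue

variable {V ι : Type*} (G : SimpleGraph V) (K : ι → Finset V) (m : ι → ℕ)

def glue : SimpleGraph (V ⊕ Σ i, Fin (m i)) where
  Adj x y := match x, y with
    | .inl u, .inl v => G.Adj u v
    | .inl u, .inr y => u ∈ K y.1
    | .inr x, .inl v => v ∈ K x.1
    | .inr x, .inr y => x ≠ y ∧ x.1 = y.1
  symm := ⟨by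
    rintro (u | x) (v | y) h
    exacts [h.symm, h, h, ⟨h.1.symm, h.2.symm⟩]⟩
  loopless := ⟨by
    rintro (u | x) h
    exacts [G.loopless.irrefl u h, h.1 rfl]⟩

def glueBlock (i : ι) : Finset (V ⊕ Σ i, Fin (m i)) :=
  (K i).disjSum (univ.map (Embedding.sigmaMk i))

variable {G K m}

@[simp] theorem glue_adj_inl_inl {u v : V} : (G.glue K m).Adj (.inl u) (.inl v) ↔ G.Adj u v :=
  Iff.rfl

@[simp] theorem inl_mem_glueBlock {u : V} {i : ι} : .inl u ∈ glueBlock K m i ↔ u ∈ K i :=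
  inl_mem_disjSum

@[simp] theorem inr_mem_glueBlock {x : Σ i, Fin (m i)} {i : ι} :
    .inr x ∈ glueBlock K m i ↔ x.1 = i := by
  simp only [glueBlock, inr_mem_disjSum, mem_map, mem_univ, true_and]
  constructor
  · rintro ⟨k, rfl⟩; rfl
  · rintro rfl; exact ⟨x.2, rfl⟩

theorem card_glueBlock (i : ι) : #(glueBlock K m i) = #(K i) + m i := by
  simp [glueBlock, card_disjSum]

variable (G K m) in
def glueEmbedding : G ↪g G.glue K m := ⟨.inl, Iff.rfl⟩

theorem mem_glueBlock_of_adj_inr {w : V ⊕ Σ i, Fin (m i)} {x : Σ i, Fin (m i)}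
    (h : (G.glue K m).Adj w (.inr x)) : w ∈ glueBlock K m x.1 := by
  rcases w with u | y
  exacts [inl_mem_glueBlock.2 h, inr_mem_glueBlock.2 h.2]

theorem exists_eq_inl_of_forall_not_mem_glueBlock {w : V ⊕ Σ i, Fin (m i)}
    (hw : ∀ i, w ∉ glueBlock K m i) : ∃ u, w = .inl u := by
  rcases w with u | x
  exacts [⟨u, rfl⟩, (hw x.1 (inr_mem_glueBlock.2 rfl)).elim]

theorem isClique_glueBlock {i : ι} (hK : G.IsClique (K i)) :
    (G.glue K m).IsClique (glueBlock K m i) := by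
  rintro (u | x) hx (v | y) hy hxy <;>
    simp only [mem_coe, inl_mem_glueBlock, inr_mem_glueBlock] at hx hy
  · exact hK hx hy (by simpa using hxy)
  · exact (hy ▸ hx : u ∈ K y.1)
  · exact (hx ▸ hy : v ∈ K x.1)
  · exact ⟨by simpa using hxy, hx.trans hy.symm⟩

theorem eq_of_mem_glueBlock (hK : Pairwise (Disjoint on K)) {w : V ⊕ Σ i, Fin (m i)} {i j : ι}
    (hi : w ∈ glueBlock K m i) (hj : w ∈ glueBlock K m j) : i = j := by
  rcases w with u | x
  · by_contra hij
    exact Finset.disjoint_left.mp (hK hij) (inl_mem_glueBlock.1 hi) (inl_mem_glueBlock.1 hj)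
  · exact (inr_mem_glueBlock.1 hi).symm.trans (inr_mem_glueBlock.1 hj)

theorem mem_glueBlock_of_adj (hK : Pairwise (Disjoint on K))
    (hcl : ∀ i, G.TriangleClosed (K i)) {w x y : V ⊕ Σ i, Fin (m i)} {i : ι}
    (hw : w ∈ glueBlock K m i) (hwx : (G.glue K m).Adj w x) (hwy : (G.glue K m).Adj w y)
    (hxy : (G.glue K m).Adj x y) : x ∈ glueBlock K m i := by
  rcases x with u | x
  · rcases w with a | w
    · rcases y with b | y
      · exact inl_mem_glueBlock.2 (hcl i (inl_mem_glueBlock.1 hw) hwx hwy hxy)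
      · obtain rfl := eq_of_mem_glueBlock hK hw (mem_glueBlock_of_adj_inr hwy)
        exact mem_glueBlock_of_adj_inr hxy
    · obtain rfl := inr_mem_glueBlock.1 hw
      exact inl_mem_glueBlock.2 hwx
  · obtain rfl := eq_of_mem_glueBlock hK hw (mem_glueBlock_of_adj_inr hwx)
    exact inr_mem_glueBlock.2 rfl

theorem not_hasBowtie_glue (hK : Pairwise (Disjoint on K)) (hcl : ∀ i, G.TriangleClosed (K i))
    (hG : ¬HasBowtie G) (hcard : ∀ i, #(K i) + m i ≤ 4) :
    ¬HasBowtie (G.glue K m) := by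
  classical
  rintro ⟨a, b, c, d, e, h₁, h₂, h₃, h₄, h₅, h₆, h₇, h₈, h₉, h₁₀, A₁, A₂, A₃, A₄, A₅, A₆⟩
  -- A bowtie meeting a block lies inside it, but a block has at most four vertices.
  by_cases ha : ∃ i, a ∈ glueBlock K m i
  · obtain ⟨i, ha⟩ := ha
    have hsub : ({a, b, c, d, e} : Finset _) ⊆ glueBlock K m i := by
      simp only [insert_subset_iff, singleton_subset_iff]
      exact ⟨ha, mem_glueBlock_of_adj hK hcl ha A₁ A₂ A₃,
        mem_glueBlock_of_adj hK hcl ha A₂ A₁ A₃.symm, mem_glueBlock_of_adj hK hcl ha A₄ A₅ A₆,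
        mem_glueBlock_of_adj hK hcl ha A₅ A₄ A₆.symm⟩
    have h5 : #({a, b, c, d, e} : Finset _) = 5 := by simp [card_insert_of_notMem, *]
    have := (card_le_card hsub).trans_eq (card_glueBlock i)
    linarith [hcard i]
  · simp only [not_exists] at ha
    have old {w : V ⊕ Σ i, Fin (m i)} (h : (G.glue K m).Adj a w) : ∃ u, w = .inl u := by
      rcases w with u | x
      exacts [⟨u, rfl⟩, (ha x.1 (mem_glueBlock_of_adj_inr h)).elim]
    obtain ⟨a, rfl⟩ := exists_eq_inl_of_forall_not_mem_glueBlock ha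
    obtain ⟨b, rfl⟩ := old A₁
    obtain ⟨c, rfl⟩ := old A₂
    obtain ⟨d, rfl⟩ := old A₄
    obtain ⟨e, rfl⟩ := old A₅
    simp only [ne_eq, Sum.inl.injEq, glue_adj_inl_inl] at *
    exact hG ⟨a, b, c, d, e, h₁, h₂, h₃, h₄, h₅, h₆, h₇, h₈, h₉, h₁₀, A₁, A₂, A₃, A₄, A₅, A₆⟩

end Glue

section Secluded

variable {V : Type*} {G : SimpleGraph V}

-- `{v}` for a vertex `v` on no triangle, or a triangle meeting no other triangle.
def IsSecludedClique (G : SimpleGraph V) (s : Finset V) : Prop :=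
  G.IsClique s ∧ (#s = 1 ∨ #s = 3) ∧ G.TriangleClosed s

theorem subset_of_triangleClosed [DecidableEq V] {s t : Finset V} (hs : G.IsClique s)
    (h3 : 3 ≤ #s) (ht : G.TriangleClosed t) {u : V} (hus : u ∈ s) (hut : u ∈ t) : s ⊆ t := by
  intro p hp
  obtain rfl | hpu := eq_or_ne p u
  · exact hut
  have hcard : 1 < #(s.erase u) := by rw [card_erase_of_mem hus]; omega
  obtain ⟨q, hq, hqp⟩ := exists_mem_ne hcard p
  obtain ⟨hqu, hq⟩ := mem_erase.mp hq
  exact ht hut (hs hus hp hpu.symm) (hs hus hq hqu.symm) (hs hp hq hqp.symm)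

theorem IsSecludedClique.eq_of_mem {s t : Finset V} (hs : G.IsSecludedClique s)
    (ht : G.IsSecludedClique t) {u : V} (hus : u ∈ s) (hut : u ∈ t) : s = t := by
  classical
  obtain ⟨hs, hs₁ | hs₃, hsc⟩ := hs <;> obtain ⟨ht, ht₁ | ht₃, htc⟩ := ht
  · rw [card_eq_one] at hs₁ ht₁
    obtain ⟨a, rfl⟩ := hs₁
    obtain ⟨b, rfl⟩ := ht₁
    rw [mem_singleton] at hus hut
    rw [← hus, hut]
  · have := card_le_card (subset_of_triangleClosed ht ht₃.ge hsc hut hus)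
    omega
  · have := card_le_card (subset_of_triangleClosed hs hs₃.ge htc hus hut)
    omega
  · exact eq_of_subset_of_card_le (subset_of_triangleClosed hs hs₃.ge htc hus hut) (by omega)

theorem IsSecludedClique.card_le {s : Finset V} (hs : G.IsSecludedClique s) : #s ≤ 3 := by
  rcases hs.2.1 with h | h <;> omega

theorem pairwise_disjoint_isSecludedClique :
    Pairwise (Disjoint on (Subtype.val : {s // G.IsSecludedClique s} → Finset V)) := by
  intro s t hst
  rw [onFun, Finset.disjoint_left]
  exact fun u hus hut => hst (Subtype.ext (s.2.eq_of_mem t.2 hus hut))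

theorem inCopy_chimney_two_of_forall_not_mem [DecidableEq V] (hG : ¬HasBowtie G) {v : V}
    (hv : ∀ s, G.IsSecludedClique s → v ∉ s) : InCopy (chimney 2) G v := by
  obtain ⟨x, y, hvx, hvy, hxy⟩ : ∃ x y, G.Adj v x ∧ G.Adj v y ∧ G.Adj x y := by
    by_contra! h
    refine hv {v} ⟨by simp, Or.inl (card_singleton v), ?_⟩ (mem_singleton_self v)
    intro u p q hu hup huq hpq
    rw [mem_singleton] at hu
    exact (h p q (hu ▸ hup) (hu ▸ huq) hpq).elim
  set T : Finset V := {v, x, y}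
  have hT : G.IsNClique 3 T := is3Clique_triple_iff.mpr ⟨hvx, hvy, hxy⟩
  have hopen : ¬G.TriangleClosed T :=
    fun h => hv T ⟨hT.isClique, Or.inr hT.card_eq, h⟩ (by simp [T])
  simp only [TriangleClosed, not_forall] at hopen
  obtain ⟨u, p, q, huT, hup, huq, hpq, hpT⟩ := hopen
  have hS : G.IsNClique 3 {u, p, q} := is3Clique_triple_iff.mpr ⟨hup, huq, hpq⟩
  have hpos : 0 < #(T ∩ {u, p, q}) := card_pos.mpr ⟨u, mem_inter.mpr ⟨huT, by simp⟩⟩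
  have hlt : #(T ∩ {u, p, q}) < 3 := by
    rw [← hS.card_eq]
    refine card_lt_card ((ssubset_iff_of_subset inter_subset_right).mpr ⟨p, by simp, ?_⟩)
    exact fun h => hpT (mem_inter.mp h).1
  refine inCopy_chimney_two_of_card_inter_eq_two hT hS ?_ (by simp [T])
  have := mt (hasBowtie_of_card_inter_eq_one hT hS) hG
  omega

end Secluded

section Completion

variable {V : Type*} (G : SimpleGraph V)

abbrev secludedCompletion :
    SimpleGraph (V ⊕ Σ s : {s // G.IsSecludedClique s}, Fin (4 - #s.1)) :=
  G.glue Subtype.val fun s => 4 - #s.1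

variable {G}

theorem not_hasBowtie_secludedCompletion (hG : ¬HasBowtie G) :
    ¬HasBowtie G.secludedCompletion :=
  not_hasBowtie_glue pairwise_disjoint_isSecludedClique (fun s => s.2.2.2) hG
    fun s => by have := s.2.card_le; omega

theorem goodGraph_secludedCompletion (hG : ¬HasBowtie G) : GoodGraph G.secludedCompletion := by
  classical
  intro w
  by_cases hw : ∃ s, w ∈ glueBlock Subtype.val _ s
  · obtain ⟨s, hw⟩ := hw
    have hcard : #s.1 + (4 - #s.1) = 4 := by have := s.2.card_le; omega
    exact .inr (inCopy_top_of_isNClique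
      ⟨isClique_glueBlock s.2.1, (card_glueBlock s).trans hcard⟩ hw)
  · simp only [not_exists] at hw
    obtain ⟨v, rfl⟩ := exists_eq_inl_of_forall_not_mem_glueBlock hw
    have hv : ∀ s, G.IsSecludedClique s → v ∉ s :=
      fun s hs hvs => hw ⟨s, hs⟩ (inl_mem_glueBlock.2 hvs)
    exact .inl ⟨2, le_rfl, (inCopy_chimney_two_of_forall_not_mem hG hv).map (glueEmbedding ..)⟩

end Completion

end SimpleGraph

/-- Every finite bowtie-free graph is a (not necessarily induced) subgraph of a
finite good bowtie-free graph. -/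
theorem bowtieFree_subgraph_of_good {V : Type*} [Fintype V] (G : SimpleGraph V)
    (hbf : ¬ HasBowtie G) :
    ∃ (W : Type) (_ : Fintype W) (G' : SimpleGraph W) (f : V ↪ W),
      ¬ HasBowtie G' ∧ GoodGraph G' ∧ ∀ u v : V, G.Adj u v → G'.Adj (f u) (f v) := by
  classical
  let e : G ≃g G.overFin rfl := G.overFinIso rfl
  have hbf' : ¬HasBowtie (G.overFin rfl) := fun h => hbf (h.map e.symm.toEmbedding)
  let φ : G ↪g (G.overFin rfl).secludedCompletion :=
    e.toEmbedding.trans (SimpleGraph.glueEmbedding ..)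
  exact ⟨_, Fintype.ofFinite _, _, φ.toEmbedding,
    SimpleGraph.not_hasBowtie_secludedCompletion hbf',
    SimpleGraph.goodGraph_secludedCompletion hbf', fun u v h => φ.map_adj_iff.2 h⟩
end

section
/- Let G be a finite bowtie-free graph with a vertex v not contained in any triangle. Then the graph G' obtained from G by adding three new vertices forming a 2-chimney with v as one of its non-central vertices is still bowtie-free. -/
/-- The graph obtained from `G` by attaching a fresh 2-chimney with `v` playing the
role of the non-central vertex `v₁`: `inr 0 = u_L`, `inr 1 = u_R`, `inr 2 = v₂`. -/
def attach2Chimney {V : Type*} (G : SimpleGraph V) (v : V) : SimpleGraph (V ⊕ Fin 3) :=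
  SimpleGraph.fromRel (fun a b =>
    (∃ x y : V, a = Sum.inl x ∧ b = Sum.inl y ∧ G.Adj x y) ∨
    (a = Sum.inr 0 ∧ b = Sum.inr 1) ∨
    (a = Sum.inl v ∧ (b = Sum.inr 0 ∨ b = Sum.inr 1)) ∨
    (a = Sum.inr 2 ∧ (b = Sum.inr 0 ∨ b = Sum.inr 1)))

/-!
Every triangle of `G'` is either a triangle of `G` or one of the two chimney triangles, both of
which contain the edge `u_L u_R`. Two chimney triangles therefore share two vertices, and a triangle
of `G` can meet a chimney triangle only in `v`, which lies in no triangle of `G`. So both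
triangles of a bowtie in `G'` come from `G`.
-/

open Sum SimpleGraph

lemma isTriangle_iff_isNClique {V : Type*} {G : SimpleGraph V} {t : Finset V} :
    IsTriangle G t ↔ G.IsNClique 3 t := by
  rw [isNClique_iff, isClique_iff, IsTriangle, and_comm]
  exact and_congr_left' ⟨fun h u hu w hw => h u hu w hw, fun h u hu w hw => h hu hw⟩

lemma isTriangle_triple {V : Type*} [DecidableEq V] {G : SimpleGraph V} {x y z : V}
    (hxy : G.Adj x y) (hxz : G.Adj x z) (hyz : G.Adj y z) : IsTriangle G {x, y, z} :=
  isTriangle_iff_isNClique.2 (is3Clique_triple_iff.2 ⟨hxy, hxz, hyz⟩)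

namespace attach2Chimney

variable {V : Type*} {G : SimpleGraph V} {v x y : V} {i j : Fin 3}

@[simp]
lemma adj_inl_inl : (attach2Chimney G v).Adj (inl x) (inl y) ↔ G.Adj x y := by
  simpa [attach2Chimney, or_iff_left_of_imp Adj.symm] using Adj.ne

@[simp]
lemma adj_inl_inr : (attach2Chimney G v).Adj (inl x) (inr i) ↔ x = v ∧ i ≠ 2 := by
  fin_cases i <;> simp [attach2Chimney]

@[simp]
lemma adj_inr_inl : (attach2Chimney G v).Adj (inr i) (inl x) ↔ x = v ∧ i ≠ 2 := by
  rw [adj_comm, adj_inl_inr]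

@[simp]
lemma adj_inr_inr : (attach2Chimney G v).Adj (inr i) (inr j) ↔ i ≠ j := by
  fin_cases i <;> fin_cases j <;> simp [attach2Chimney]

lemma triangle_inl_or_chimney {a b c : V ⊕ Fin 3} (hab : (attach2Chimney G v).Adj a b)
    (hac : (attach2Chimney G v).Adj a c) (hbc : (attach2Chimney G v).Adj b c) :
    (∃ x y z, a = inl x ∧ b = inl y ∧ c = inl z) ∨
      inr 0 ∈ ({a, b, c} : Set (V ⊕ Fin 3)) ∧ inr 1 ∈ ({a, b, c} : Set (V ⊕ Fin 3)) := by
  rcases a with x | i <;> rcases b with y | j <;> rcases c with z | k <;>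
    simp_all <;> omega

lemma eq_of_inr_zero_mem_triangle {b c : V ⊕ Fin 3} (hb : (attach2Chimney G v).Adj (inl x) b)
    (hc : (attach2Chimney G v).Adj (inl x) c) (h0 : inr 0 ∈ ({inl x, b, c} : Set (V ⊕ Fin 3))) :
    x = v := by
  simp only [Set.mem_insert_iff, Set.mem_singleton_iff, reduceCtorEq, false_or] at h0
  rcases h0 with rfl | rfl <;> simp_all

end attach2Chimney

theorem attach2Chimney_bowtieFree_general {V : Type*} (G : SimpleGraph V) (v : V)
    (hbf : ¬ HasBowtie G)
    (hv : ∀ t : Finset V, ¬ (IsTriangle G t ∧ v ∈ t)) :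
    ¬ HasBowtie (attach2Chimney G v) := by
  classical
  rintro ⟨a, b, c, d, e, hab, hac, had, hae, hbc, hbd, hbe, hcd, hce, hde,
    Aab, Aac, Abc, Aad, Aae, Ade⟩
  have hv_adj {y z : V} (hy : G.Adj v y) (hz : G.Adj v z) : ¬ G.Adj y z := fun hyz =>
    hv _ ⟨isTriangle_triple hy hz hyz, Finset.mem_insert_self v _⟩
  have hshared {w} (habc : w ∈ ({a, b, c} : Set _)) (hade : w ∈ ({a, d, e} : Set _)) : w = a := by
    simp only [Set.mem_insert_iff, Set.mem_singleton_iff] at habc hade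
    grind
  rcases attach2Chimney.triangle_inl_or_chimney Aab Aac Abc with ⟨x, y, z, rfl, rfl, rfl⟩ | ⟨h0, h1⟩ <;>
    rcases attach2Chimney.triangle_inl_or_chimney Aad Aae Ade with ⟨x', w, u, hx, rfl, rfl⟩ | ⟨h0', h1'⟩
  · obtain rfl := inl_injective hx
    simp only [ne_eq, inl.injEq, attach2Chimney.adj_inl_inl] at *
    exact hbf ⟨x, y, z, w, u, by tauto⟩
  · obtain rfl := attach2Chimney.eq_of_inr_zero_mem_triangle Aad Aae h0'
    simp only [attach2Chimney.adj_inl_inl] at Aab Aac Abc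
    exact hv_adj Aab Aac Abc
  · subst hx
    obtain rfl := attach2Chimney.eq_of_inr_zero_mem_triangle Aab Aac h0
    simp only [attach2Chimney.adj_inl_inl] at Aad Aae Ade
    exact hv_adj Aad Aae Ade
  · exact absurd ((hshared h0 h0').trans (hshared h1 h1').symm) (by simp)

/-- If `v` is in no triangle of a finite bowtie-free graph `G`, then attaching a
2-chimney at `v` keeps the graph bowtie-free. -/
theorem attach2Chimney_bowtieFree {V : Type*} [Fintype V] (G : SimpleGraph V) (v : V)
    (hbf : ¬ HasBowtie G)
    (hv : ∀ t : Finset V, ¬ (IsTriangle G t ∧ v ∈ t)) :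
    ¬ HasBowtie (attach2Chimney G v) :=
  attach2Chimney_bowtieFree_general G v hbf hv
end

section
/- Let G be a good bowtie-free graph and let E_0 be the set of edges of G that lie in some triangle. Then the graph (V(G), E_0) is a disjoint union of copies of chimneys C_n (n ≥ 2) and copies of K4. -/
/-- The subgraph of `G` consisting of the edges lying in some triangle. -/
def triEdges {V : Type*} (G : SimpleGraph V) : SimpleGraph V where
  Adj u v := G.Adj u v ∧ ∃ w, G.Adj u w ∧ G.Adj v w
  symm := ⟨fun _ _ h => ⟨h.1.symm, h.2.choose, h.2.choose_spec.2, h.2.choose_spec.1⟩⟩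
  loopless := ⟨fun _ h => G.loopless.irrefl _ h.1⟩

/-- `w` lies in at least two triangles of `G`. -/
def InTwoTriangles {V : Type*} (G : SimpleGraph V) (w : V) : Prop :=
  ∃ t₁ t₂ : Finset V, t₁ ≠ t₂ ∧ IsTriangle G t₁ ∧ IsTriangle G t₂ ∧ w ∈ t₁ ∧ w ∈ t₂

/-!
Bowtie-freeness says that two triangles through a common vertex share a second vertex. Hence a
triangle through a vertex of a `K₄` stays inside that `K₄`. For a chimney with base edge `ab`,
call the common neighbours of `a` and `b` apices. If two apices are adjacent they span a `K₄`
with `a` and `b`. Otherwise a triangle through `a` avoiding `b` would meet every triangle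
`a b s`, hence contain two non-adjacent apices, which is absurd; and a triangle through an apex
meets `{a, b}`, so by the previous case its other two vertices are exactly `a` and `b`. Thus the
vertex set of the `K₄`, resp. `{a, b}` together with all apices, is closed under triangle edges
and is the whole component of the triangle-edge graph.
-/

namespace SimpleGraph

variable {V W : Type*}

theorem setOf_reachable_eq_of_closed (H : SimpleGraph V) {T : Set V} {v : V} (hv : v ∈ T)
    (hreach : ∀ w ∈ T, H.Reachable v w) (hclosed : ∀ x ∈ T, ∀ y, H.Adj x y → y ∈ T) :
    {w | H.Reachable v w} = T := by
  refine Set.Subset.antisymm ?_ hreach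
  rintro w ⟨p⟩
  clear hreach
  induction p with
  | nil => exact hv
  | cons hxy _ ih => exact ih (hclosed _ hv _ hxy)

theorem setOf_reachable_eq_of_reachable (H : SimpleGraph V) {u v : V} (h : H.Reachable u v) :
    {w | H.Reachable u w} = {w | H.Reachable v w} :=
  Set.ext fun _ => ⟨h.symm.trans, h.trans⟩

theorem nonempty_induce_range_iso {H : SimpleGraph V} {K : SimpleGraph W} (f : W ↪ V)
    (hf : ∀ a b, H.Adj (f a) (f b) ↔ K.Adj a b) : Nonempty (H.induce (Set.range f) ≃g K) :=
  ⟨(Embedding.isoInduceRange ⟨f, hf _ _⟩).symm⟩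

end SimpleGraph

section Bowtie

variable {V : Type*} {G : SimpleGraph V}

theorem triangles_meet_of_not_hasBowtie (hbf : ¬ HasBowtie G) {a b c d e : V}
    (hab : G.Adj a b) (hac : G.Adj a c) (hbc : G.Adj b c)
    (had : G.Adj a d) (hae : G.Adj a e) (hde : G.Adj d e) :
    b = d ∨ b = e ∨ c = d ∨ c = e := by
  by_contra! h
  exact hbf ⟨a, b, c, d, e, hab.ne, hac.ne, had.ne, hae.ne, hbc.ne, h.1, h.2.1, h.2.2.1,
    h.2.2.2, hde.ne, hab, hac, hbc, had, hae, hde⟩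

end Bowtie

section K4

variable {V : Type*} {G : SimpleGraph V} {f : Fin 4 → V}

theorem mem_range_of_triangle_at_k4 (hbf : ¬ HasBowtie G)
    (hf : ∀ i j, i ≠ j → G.Adj (f i) (f j)) {i : Fin 4} {y w : V}
    (hy : G.Adj (f i) y) (hw : G.Adj (f i) w) (hyw : G.Adj y w) : y ∈ Set.range f := by
  obtain ⟨l, hl⟩ : ∃ l, ∀ m, f m = w → m = l := by
    by_cases hwf : w ∈ Set.range f
    · obtain ⟨l, rfl⟩ := hwf
      exact ⟨l, fun m hm => by_contra fun hml => (hf m l hml).ne hm⟩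
    · exact ⟨i, fun m hm => (hwf ⟨m, hm⟩).elim⟩
  have two_others : ∀ i l : Fin 4, ∃ j k, j ≠ i ∧ j ≠ l ∧ k ≠ i ∧ k ≠ l ∧ j ≠ k := by decide
  obtain ⟨j, k, hji, hjl, hki, hkl, hjk⟩ := two_others i l
  rcases triangles_meet_of_not_hasBowtie hbf (hf i j hji.symm) (hf i k hki.symm) (hf j k hjk)
    hy hw hyw with h | h | h | h
  · exact ⟨j, h⟩
  · exact (hjl (hl j h)).elim
  · exact ⟨k, h⟩
  · exact (hkl (hl k h)).elim

theorem adj_vec4_of_adj {a b c d : V} (hab : G.Adj a b) (hac : G.Adj a c) (had : G.Adj a d)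
    (hbc : G.Adj b c) (hbd : G.Adj b d) (hcd : G.Adj c d) (i j : Fin 4) (hij : i ≠ j) :
    G.Adj (![a, b, c, d] i) (![a, b, c, d] j) := by
  fin_cases i <;> fin_cases j <;>
    simp [hab, hac, had, hbc, hbd, hcd, hab.symm, hac.symm, had.symm, hbc.symm, hbd.symm,
      hcd.symm] at hij ⊢

theorem triEdges_adj_of_k4 (hf : ∀ i j, i ≠ j → G.Adj (f i) (f j)) {i j : Fin 4}
    (hij : i ≠ j) : (triEdges G).Adj (f i) (f j) := by
  have third : ∀ i j : Fin 4, ∃ k, k ≠ i ∧ k ≠ j := by decide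
  obtain ⟨k, hki, hkj⟩ := third i j
  exact ⟨hf i j hij, f k, hf i k hki.symm, hf j k hkj.symm⟩

theorem setOf_triEdges_reachable_k4 (hbf : ¬ HasBowtie G)
    (hf : ∀ i j, i ≠ j → G.Adj (f i) (f j)) (i : Fin 4) :
    {w | (triEdges G).Reachable (f i) w} = Set.range f := by
  refine (triEdges G).setOf_reachable_eq_of_closed ⟨i, rfl⟩ ?_ ?_
  · rintro _ ⟨j, rfl⟩
    rcases eq_or_ne i j with rfl | hij
    · rfl
    · exact (triEdges_adj_of_k4 hf hij).reachable
  · rintro _ ⟨j, rfl⟩ y ⟨hy, w, hw, hyw⟩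
    exact mem_range_of_triangle_at_k4 hbf hf hy hw hyw

theorem nonempty_triEdges_component_iso_top (hbf : ¬ HasBowtie G)
    (hf : ∀ i j, i ≠ j → G.Adj (f i) (f j)) (i : Fin 4) :
    Nonempty ((triEdges G).induce {w | (triEdges G).Reachable (f i) w} ≃g
      (⊤ : SimpleGraph (Fin 4))) := by
  have hinj : Function.Injective f := fun j k h => by_contra fun hjk => (hf j k hjk).ne h
  rw [setOf_triEdges_reachable_k4 hbf hf i]
  exact SimpleGraph.nonempty_induce_range_iso ⟨f, hinj⟩ fun j k =>
    ⟨fun h hjk => h.ne (congrArg f hjk), triEdges_adj_of_k4 hf⟩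

end K4

section Chimney

variable {V : Type*} {G : SimpleGraph V} {a b s₀ s₁ : V}

theorem eq_of_triangle_at_chimney_base (hbf : ¬ HasBowtie G) (hab : G.Adj a b)
    (hs₀ : s₀ ∈ G.commonNeighbors a b) (hs₁ : s₁ ∈ G.commonNeighbors a b) (hne : s₀ ≠ s₁)
    (hind : ¬ G.Adj s₀ s₁) {y w : V} (hy : G.Adj a y) (hw : G.Adj a w) (hyw : G.Adj y w) :
    y = b ∨ w = b := by
  by_contra! h
  have hmeet : ∀ s ∈ G.commonNeighbors a b, s = y ∨ s = w := fun s hs => by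
    rcases triangles_meet_of_not_hasBowtie hbf hab hs.1 hs.2 hy hw hyw with h' | h' | h' | h'
    · exact (h.1 h'.symm).elim
    · exact (h.2 h'.symm).elim
    · exact Or.inl h'
    · exact Or.inr h'
  rcases hmeet s₀ hs₀ with rfl | rfl <;> rcases hmeet s₁ hs₁ with rfl | rfl
  · exact hne rfl
  · exact hind hyw
  · exact hind hyw.symm
  · exact hne rfl

theorem eq_of_triangle_at_chimney_apex (hbf : ¬ HasBowtie G) (hab : G.Adj a b)
    (hs₀ : s₀ ∈ G.commonNeighbors a b) (hs₁ : s₁ ∈ G.commonNeighbors a b) (hne : s₀ ≠ s₁)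
    (hind : ¬ G.Adj s₀ s₁) {s y w : V} (hs : s ∈ G.commonNeighbors a b)
    (hy : G.Adj s y) (hw : G.Adj s w) (hyw : G.Adj y w) :
    y = a ∨ y = b := by
  rcases triangles_meet_of_not_hasBowtie hbf hs.1.symm hs.2.symm hab hy hw hyw
    with rfl | rfl | rfl | rfl
  · exact Or.inl rfl
  · rcases eq_of_triangle_at_chimney_base hbf hab hs₀ hs₁ hne hind hs.1 hyw.symm hy
      with h | h
    · exact (hs.2.ne h.symm).elim
    · exact Or.inr h
  · exact Or.inr rfl
  · rcases eq_of_triangle_at_chimney_base hbf hab.symm ⟨hs₀.2, hs₀.1⟩ ⟨hs₁.2, hs₁.1⟩ hne hind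
      hs.2 hyw.symm hy with h | h
    · exact (hs.1.ne h.symm).elim
    · exact Or.inl h

theorem triEdges_reachable_of_mem_chimney (hab : G.Adj a b) (hs₀ : s₀ ∈ G.commonNeighbors a b)
    {x : V} (hx : x ∈ insert a (insert b (G.commonNeighbors a b))) :
    (triEdges G).Reachable a x := by
  rcases hx with rfl | rfl | hx
  · rfl
  · exact SimpleGraph.Adj.reachable ⟨hab, s₀, hs₀.1, hs₀.2⟩
  · exact SimpleGraph.Adj.reachable ⟨hx.1, b, hab, hx.2.symm⟩

theorem setOf_triEdges_reachable_chimney (hbf : ¬ HasBowtie G) (hab : G.Adj a b)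
    (hs₀ : s₀ ∈ G.commonNeighbors a b) (hs₁ : s₁ ∈ G.commonNeighbors a b) (hne : s₀ ≠ s₁)
    (hind : ¬ G.Adj s₀ s₁) :
    {w | (triEdges G).Reachable a w} = insert a (insert b (G.commonNeighbors a b)) := by
  refine (triEdges G).setOf_reachable_eq_of_closed (Set.mem_insert a _)
    (fun x hx => triEdges_reachable_of_mem_chimney hab hs₀ hx) ?_
  rintro x hx y ⟨hxy, w, hxw, hyw⟩
  rcases hx with rfl | rfl | hx
  · rcases eq_of_triangle_at_chimney_base hbf hab hs₀ hs₁ hne hind hxy hxw hyw with rfl | rfl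
    · exact .inr (.inl rfl)
    · exact .inr (.inr ⟨hxy, hyw.symm⟩)
  · rcases eq_of_triangle_at_chimney_base hbf hab.symm ⟨hs₀.2, hs₀.1⟩ ⟨hs₁.2, hs₁.1⟩ hne hind
      hxy hxw hyw with rfl | rfl
    · exact .inl rfl
    · exact .inr (.inr ⟨hyw.symm, hxy⟩)
  · rcases eq_of_triangle_at_chimney_apex hbf hab hs₀ hs₁ hne hind hx hxy hxw hyw with rfl | rfl
    · exact .inl rfl
    · exact .inr (.inl rfl)

def chimneyEmbedding (hab : G.Adj a b) {n : ℕ} (e : Fin n ≃ G.commonNeighbors a b) :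
    Fin 2 ⊕ Fin n ↪ V where
  toFun := Sum.elim ![a, b] (Subtype.val ∘ e)
  inj' := by
    refine Function.Injective.sumElim ?_ (Subtype.val_injective.comp e.injective) ?_
    · intro i j h
      fin_cases i <;> fin_cases j <;> simp_all [hab.ne, hab.ne']
    · intro i j
      fin_cases i
      exacts [(e j).2.1.ne, (e j).2.2.ne]

theorem range_chimneyEmbedding (hab : G.Adj a b) {n : ℕ} (e : Fin n ≃ G.commonNeighbors a b) :
    Set.range (chimneyEmbedding hab e) = insert a (insert b (G.commonNeighbors a b)) := by
  ext x
  simp only [chimneyEmbedding, Function.Embedding.coeFn_mk, Set.Sum.elim_range, Set.range_comp,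
    Matrix.range_cons, Matrix.range_empty, Equiv.range_eq_univ, Set.image_univ,
    Subtype.range_coe_subtype, Set.mem_union, Set.mem_insert_iff, Set.mem_singleton_iff]
  tauto

theorem triEdges_adj_chimneyEmbedding_iff (hab : G.Adj a b) (hs₀ : s₀ ∈ G.commonNeighbors a b)
    (hind : ∀ s ∈ G.commonNeighbors a b, ∀ t ∈ G.commonNeighbors a b, ¬ G.Adj s t) {n : ℕ}
    (e : Fin n ≃ G.commonNeighbors a b) (x y : Fin 2 ⊕ Fin n) :
    (triEdges G).Adj (chimneyEmbedding hab e x) (chimneyEmbedding hab e y) ↔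
      (chimney n).Adj x y := by
  have hbase : (triEdges G).Adj a b := ⟨hab, s₀, hs₀.1, hs₀.2⟩
  have hapex : ∀ j, (triEdges G).Adj a (e j) ∧ (triEdges G).Adj b (e j) := fun j =>
    ⟨⟨(e j).2.1, b, hab, (e j).2.2.symm⟩, ⟨(e j).2.2, a, hab.symm, (e j).2.1.symm⟩⟩
  rcases x with i | j <;> rcases y with i' | j'
  · fin_cases i <;> fin_cases i' <;> simp [chimney, chimneyEmbedding, hbase, hbase.symm]
  · fin_cases i <;> simp [chimney, chimneyEmbedding, hapex]
  · fin_cases i' <;> simp [chimney, chimneyEmbedding, (hapex _).1.symm, (hapex _).2.symm]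
  · exact iff_of_false (fun h => hind _ (e j).2 _ (e j').2 h.1) (by simp [chimney])

theorem exists_triEdges_component_iso_chimney [Finite V] (hbf : ¬ HasBowtie G) (hab : G.Adj a b)
    (hs₀ : s₀ ∈ G.commonNeighbors a b) (hs₁ : s₁ ∈ G.commonNeighbors a b) (hne : s₀ ≠ s₁)
    (hind : ∀ s ∈ G.commonNeighbors a b, ∀ t ∈ G.commonNeighbors a b, ¬ G.Adj s t) :
    ∃ n, 2 ≤ n ∧
      Nonempty ((triEdges G).induce {w | (triEdges G).Reachable a w} ≃g chimney n) := by
  have htwo : 1 < Nat.card (G.commonNeighbors a b) :=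
    Finite.one_lt_card_iff_nontrivial.2 ⟨⟨s₀, hs₀⟩, ⟨s₁, hs₁⟩, by simpa using hne⟩
  let e := (Finite.equivFin (G.commonNeighbors a b)).symm
  refine ⟨_, htwo, ?_⟩
  rw [setOf_triEdges_reachable_chimney hbf hab hs₀ hs₁ hne (hind _ hs₀ _ hs₁),
    ← range_chimneyEmbedding hab e]
  exact SimpleGraph.nonempty_induce_range_iso _ (triEdges_adj_chimneyEmbedding_iff hab hs₀ hind e)

end Chimney

/-- In a good bowtie-free graph, the graph of triangle edges is a disjoint union of
chimneys `C_n` (`n ≥ 2`) and copies of `K₄`: each connected component of `triEdges G`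
is isomorphic to a chimney or to `K₄`. -/
theorem goodGraph_triEdges_components {V : Type*} [Fintype V] (G : SimpleGraph V)
    (hbf : ¬ HasBowtie G) (hg : GoodGraph G) (v : V) :
    (∃ n : ℕ, 2 ≤ n ∧
        Nonempty ((triEdges G).induce {w | (triEdges G).Reachable v w} ≃g chimney n)) ∨
      Nonempty ((triEdges G).induce {w | (triEdges G).Reachable v w} ≃g
        (⊤ : SimpleGraph (Fin 4))) := by
  rcases hg v with ⟨n, hn, f, hf, x, rfl⟩ | ⟨f, hf, i, rfl⟩
  · set a := f (.inl 0)
    set b := f (.inl 1)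
    have hab : G.Adj a b := hf _ _ ⟨by simp, by simp⟩
    have hapex : ∀ j, f (.inr j) ∈ G.commonNeighbors a b := fun j =>
      ⟨hf _ _ ⟨by simp, by simp⟩, hf _ _ ⟨by simp, by simp⟩⟩
    have hs₀ := hapex ⟨0, by omega⟩
    have hs₁ := hapex ⟨1, by omega⟩
    have hne : f (.inr ⟨0, by omega⟩) ≠ f (.inr ⟨1, by omega⟩) := f.injective.ne (by simp)
    have hx : f x ∈ insert a (insert b (G.commonNeighbors a b)) := by
      rcases x with i | j
      · fin_cases i
        exacts [.inl rfl, .inr (.inl rfl)]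
      · exact .inr (.inr (hapex j))
    rw [← (triEdges G).setOf_reachable_eq_of_reachable
      (triEdges_reachable_of_mem_chimney hab hs₀ hx)]
    by_cases hind : ∀ s ∈ G.commonNeighbors a b, ∀ t ∈ G.commonNeighbors a b, ¬ G.Adj s t
    · exact .inl (exists_triEdges_component_iso_chimney hbf hab hs₀ hs₁ hne hind)
    · push Not at hind
      obtain ⟨s, hs, t, ht, hst⟩ := hind
      exact .inr (nonempty_triEdges_component_iso_top (f := ![a, b, s, t]) hbf
        (adj_vec4_of_adj hab hs.1 ht.1 hs.2 ht.2 hst) 0)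
  · exact .inr (nonempty_triEdges_component_iso_top hbf hf i)
end

section
/- Let G be a graph whose edge set is partitioned into E_0 and E_1, where (V, E_0) is a disjoint union of chimneys C_n (n ≥ 2) and copies of K4, and no edge of E_1 lies in any triangle of G. Then G is bowtie-free. -/
/-!
A bowtie of `G` only uses edges lying in triangles, and these all belong to `G₀`, so it is a
bowtie of `G₀`; being connected, it lies in a single component of `G₀`. A `K₄` has only four
vertices, and every triangle of a chimney contains both ends of its central edge, so two
triangles of a chimney share at least two vertices.
-/

namespace HasBowtie

variable {V W : Type*} {G : SimpleGraph V} {H : SimpleGraph W}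

theorem of_triangle_adj {H : SimpleGraph V}
    (hGH : ∀ u v w, G.Adj u v → G.Adj u w → G.Adj v w → H.Adj u v) (hG : HasBowtie G) :
    HasBowtie H := by
  obtain ⟨a, b, c, d, e, hab, hac, had, hae, hbc, hbd, hbe, hcd, hce, hde,
    Gab, Gac, Gbc, Gad, Gae, Gde⟩ := hG
  exact ⟨a, b, c, d, e, hab, hac, had, hae, hbc, hbd, hbe, hcd, hce, hde,
    hGH a b c Gab Gac Gbc, hGH a c b Gac Gab Gbc.symm, hGH b c a Gbc Gab.symm Gac.symm,
    hGH a d e Gad Gae Gde, hGH a e d Gae Gad Gde.symm, hGH d e a Gde Gad.symm Gae.symm⟩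

theorem map_s10 (f : G →g H) (hf : Function.Injective f) (hG : HasBowtie G) : HasBowtie H := by
  obtain ⟨a, b, c, d, e, hab, hac, had, hae, hbc, hbd, hbe, hcd, hce, hde,
    Gab, Gac, Gbc, Gad, Gae, Gde⟩ := hG
  exact ⟨f a, f b, f c, f d, f e, hf.ne hab, hf.ne hac, hf.ne had, hf.ne hae, hf.ne hbc,
    hf.ne hbd, hf.ne hbe, hf.ne hcd, hf.ne hce, hf.ne hde,
    f.map_adj Gab, f.map_adj Gac, f.map_adj Gbc, f.map_adj Gad, f.map_adj Gae, f.map_adj Gde⟩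

theorem exists_induce_reachable (hG : HasBowtie G) :
    ∃ v, HasBowtie (G.induce {w | G.Reachable v w}) := by
  obtain ⟨a, b, c, d, e, hab, hac, had, hae, hbc, hbd, hbe, hcd, hce, hde,
    Gab, Gac, Gbc, Gad, Gae, Gde⟩ := hG
  refine ⟨a, ⟨a, .refl a⟩, ⟨b, Gab.reachable⟩, ⟨c, Gac.reachable⟩, ⟨d, Gad.reachable⟩,
    ⟨e, Gae.reachable⟩, ?_⟩
  simp only [ne_eq, Subtype.mk.injEq, SimpleGraph.induce_adj]
  exact ⟨hab, hac, had, hae, hbc, hbd, hbe, hcd, hce, hde, Gab, Gac, Gbc, Gad, Gae, Gde⟩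

theorem five_le_card [Fintype V] (hG : HasBowtie G) : 5 ≤ Fintype.card V := by
  classical
  obtain ⟨a, b, c, d, e, hab, hac, had, hae, hbc, hbd, hbe, hcd, hce, hde, -⟩ := hG
  have hcard : ({a, b, c, d, e} : Finset V).card = 5 := by
    rw [Finset.card_insert_of_notMem (by simp [hab, hac, had, hae]),
      Finset.card_insert_of_notMem (by simp [hbc, hbd, hbe]),
      Finset.card_insert_of_notMem (by simp [hcd, hce]),
      Finset.card_insert_of_notMem (by simp [hde]), Finset.card_singleton]
  exact hcard ▸ Finset.card_le_univ _

end HasBowtie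

theorem chimney_triangle_hub {n : ℕ} {x y z : Fin 2 ⊕ Fin n}
    (hxy : (chimney n).Adj x y) (hxz : (chimney n).Adj x z) (hyz : (chimney n).Adj y z)
    (i : Fin 2) : Sum.inl i = x ∨ Sum.inl i = y ∨ Sum.inl i = z := by
  rcases x with a | a <;> rcases y with b | b <;> rcases z with c | c <;>
    simp_all [chimney] <;> omega

theorem not_hasBowtie_chimney (n : ℕ) : ¬ HasBowtie (chimney n) := by
  rintro ⟨a, b, c, d, e, -, -, -, -, -, hbd, hbe, hcd, hce, -, hab, hac, hbc, had, hae, hde⟩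
  have hub : ∀ i, Sum.inl i = a := fun i => by
    rcases chimney_triangle_hub hab hac hbc i with h | h | h <;>
      rcases chimney_triangle_hub had hae hde i with h' | h' | h' <;> simp_all
  exact Sum.inl_injective.ne Fin.zero_ne_one ((hub 0).trans (hub 1).symm)

theorem bowtieFree_of_partition_general {V : Type*} (G G₀ G₁ : SimpleGraph V)
    (hunion : G = G₀ ⊔ G₁)
    (hcomp : ∀ v : V,
      (∃ n : ℕ, 2 ≤ n ∧ Nonempty (G₀.induce {w | G₀.Reachable v w} ≃g chimney n)) ∨
        Nonempty (G₀.induce {w | G₀.Reachable v w} ≃g (⊤ : SimpleGraph (Fin 4))))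
    (hE1 : ∀ u v : V, G₁.Adj u v → ¬ ∃ w : V, G.Adj u w ∧ G.Adj v w) :
    ¬ HasBowtie G := by
  intro hG
  have hG₀ : HasBowtie G₀ := hG.of_triangle_adj fun u v w huv huw hvw => by
    rcases (hunion ▸ huv : (G₀ ⊔ G₁).Adj u v) with h | h
    · exact h
    · exact absurd ⟨w, huw, hvw⟩ (hE1 u v h)
  obtain ⟨v, hv⟩ := hG₀.exists_induce_reachable
  rcases hcomp v with ⟨n, -, ⟨φ⟩⟩ | ⟨⟨φ⟩⟩
  · exact not_hasBowtie_chimney n (hv.map_s10 φ.toHom φ.injective)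
  · simpa using (hv.map_s10 φ.toHom φ.injective).five_le_card

/-- If the edge set of `G` is partitioned into `G₀` (a disjoint union of chimneys
`C_n`, `n ≥ 2`, and copies of `K₄`) and `G₁` whose edges lie in no triangle of `G`,
then `G` is bowtie-free. -/
theorem bowtieFree_of_partition {V : Type*} (G G₀ G₁ : SimpleGraph V)
    (hunion : G = G₀ ⊔ G₁)
    (hdisj : ∀ u v : V, ¬ (G₀.Adj u v ∧ G₁.Adj u v))
    (hcomp : ∀ v : V,
      (∃ n : ℕ, 2 ≤ n ∧ Nonempty (G₀.induce {w | G₀.Reachable v w} ≃g chimney n)) ∨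
        Nonempty (G₀.induce {w | G₀.Reachable v w} ≃g (⊤ : SimpleGraph (Fin 4))))
    (hE1 : ∀ u v : V, G₁.Adj u v → ¬ ∃ w : V, G.Adj u w ∧ G.Adj v w) :
    ¬ HasBowtie G :=
  bowtieFree_of_partition_general G G₀ G₁ hunion hcomp hE1
end
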